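/- Allowed operations preserve the incompatibility-annihilating property (golden rule): if N is an incompatibility-annihilating channel and F(N) = Σ_{μ,k} p_μ D_{k|μ} ∘ N ∘ F_{k|μ}, where {p_μ} is a probability distribution, each D_{k|μ} is a channel, each F_{k|μ} is completely positive trace-non-increasing, and Σ_k F_{k|μ} is trace-preserving for each μ, then F(N) is incompatibility-annihilating. -/

import Mathlib

open Matrix
open scoped ComplexOrder

/-- Operators on a d-dimensional complex Hilbert space. -/
abbrev Mat (d : ℕ) := Matrix (Fin d) (Fin d) ℂ

/-- A measurement assemblage: `E x a` is the effect for outcome `a` of setting `x`. -/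
def IsAssemblage {d : ℕ} {ι κ : Type} [Fintype ι] [Fintype κ]
    (E : κ → ι → Mat d) : Prop :=
  (∀ x a, (E x a).PosSemidef) ∧ ∀ x, ∑ a, E x a = 1

/-- Joint measurability: a single finite-outcome POVM `G` together with conditional
probabilities `P a x λ` reproduces all effects. -/
def JointlyMeasurable {d : ℕ} {ι κ : Type} [Fintype ι] [Fintype κ]
    (E : κ → ι → Mat d) : Prop :=
  ∃ (Λ : Type) (_ : Fintype Λ), ∃ (G : Λ → Mat d) (P : ι → κ → Λ → ℝ),
    (∀ l, (G l).PosSemidef) ∧ (∑ l, G l = 1) ∧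
    (∀ a x l, 0 ≤ P a x l) ∧ (∀ x l, ∑ a, P a x l = 1) ∧
    (∀ a x, E x a = ∑ l, (P a x l : ℂ) • G l)

/-- Choi matrix of a superoperator. -/
def ChoiM {m : Type} [Fintype m] [DecidableEq m]
    (L : Matrix m m ℂ →ₗ[ℂ] Matrix m m ℂ) : Matrix (m × m) (m × m) ℂ :=
  Matrix.of fun p q => (L (Matrix.single p.1 q.1 1)) p.2 q.2

/-- Complete positivity via positive semidefiniteness of the Choi matrix. -/
def IsCP {m : Type} [Fintype m] [DecidableEq m]
    (L : Matrix m m ℂ →ₗ[ℂ] Matrix m m ℂ) : Prop := (ChoiM L).PosSemidef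

/-- Trace preservation. -/
def IsTP {m : Type} [Fintype m] [DecidableEq m]
    (L : Matrix m m ℂ →ₗ[ℂ] Matrix m m ℂ) : Prop := ∀ X, (L X).trace = X.trace

/-- Trace-non-increasing (on positive semidefinite inputs). -/
def IsTNI {m : Type} [Fintype m] [DecidableEq m]
    (L : Matrix m m ℂ →ₗ[ℂ] Matrix m m ℂ) : Prop :=
  ∀ X : Matrix m m ℂ, X.PosSemidef → ((L X).trace).re ≤ (X.trace).re

/-- A quantum channel: completely positive and trace-preserving. -/
def IsChannel {m : Type} [Fintype m] [DecidableEq m]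
    (L : Matrix m m ℂ →ₗ[ℂ] Matrix m m ℂ) : Prop := IsCP L ∧ IsTP L

/-- A filter: completely positive and trace-non-increasing. -/
def IsFilter {m : Type} [Fintype m] [DecidableEq m]
    (L : Matrix m m ℂ →ₗ[ℂ] Matrix m m ℂ) : Prop := IsCP L ∧ IsTNI L

/-- A channel is incompatibility-annihilating: after the channel, all measurement
statistics can be reproduced by a jointly-measurable assemblage. -/
def IsIA {d : ℕ} (N : Mat d →ₗ[ℂ] Mat d) : Prop :=
  ∀ (ι κ : Type) [Fintype ι] [Fintype κ] (E : κ → ι → Mat d), IsAssemblage E →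
    ∃ M : κ → ι → Mat d, IsAssemblage M ∧ JointlyMeasurable M ∧
      ∀ ρ : Mat d, ρ.PosSemidef → ρ.trace = 1 →
        ∀ a x, (N ρ * E x a).trace = (ρ * M x a).trace

/-! Work in the Heisenberg picture. A completely positive map has a Kraus decomposition, hence a
trace dual that is again positive, and unital when the map is trace preserving. Pulling an
assemblage `E` back through the post-processing channels `D_{k|μ}` gives an assemblage indexed by
`(x, μ, k)`; since `N` is incompatibility-annihilating, its statistics after `N` are those of a
jointly measurable `M` with parent POVM `G`. Pushing `M` through the weighted duals
`p_μ F_{k|μ}†` gives an assemblage reproducing the statistics of `F(N)`: it is normalised because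
`Σ_k F_{k|μ}` is trace preserving, and jointly measurable with parent POVM
`p_μ F_{k|μ}†(G_λ)`. -/

section CompletelyPositive

variable {m : Type} [Fintype m] [DecidableEq m] {L : Matrix m m ℂ →ₗ[ℂ] Matrix m m ℂ}

theorem apply_eq_sum_choiM (L : Matrix m m ℂ →ₗ[ℂ] Matrix m m ℂ) (X : Matrix m m ℂ) (i j : m) :
    L X i j = ∑ p, ∑ q, X p q * ChoiM L (p, i) (q, j) := by
  conv_lhs => rw [Matrix.matrix_eq_sum_single X]
  simp only [map_sum, Matrix.sum_apply]
  refine Finset.sum_congr rfl fun p _ => Finset.sum_congr rfl fun q _ => ?_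
  rw [show Matrix.single p q (X p q) = X p q • Matrix.single p q 1 by
    rw [Matrix.smul_single, smul_eq_mul, mul_one], map_smul, Matrix.smul_apply, smul_eq_mul]
  rfl

/-- Writing the Choi matrix as `Cᴴ * C`, the rows of `C` give the Kraus operators. -/
theorem IsCP.exists_kraus (h : IsCP L) :
    ∃ K : m × m → Matrix m m ℂ, ∀ X, L X = ∑ r, K r * X * (K r)ᴴ := by
  open scoped MatrixOrder in
  obtain ⟨C, hC⟩ := CStarAlgebra.nonneg_iff_eq_star_mul_self.mp h.nonneg
  refine ⟨fun r => Matrix.of fun i p => star (C r (p, i)), fun X => ?_⟩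
  ext i j
  rw [apply_eq_sum_choiM, hC]
  simp only [Matrix.sum_apply, Matrix.mul_apply, Matrix.conjTranspose_apply, Matrix.of_apply,
    star_star, Finset.sum_mul, Finset.mul_sum, Matrix.star_apply]
  rw [Finset.sum_comm]
  refine (Finset.sum_congr rfl fun q _ => Finset.sum_comm).trans ?_
  rw [Finset.sum_comm]
  refine Finset.sum_congr rfl fun r _ => Finset.sum_congr rfl fun q _ =>
    Finset.sum_congr rfl fun p _ => ?_
  ring

theorem IsCP.posSemidef_apply (h : IsCP L) {X : Matrix m m ℂ} (hX : X.PosSemidef) :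
    (L X).PosSemidef := by
  obtain ⟨K, hK⟩ := h.exists_kraus
  rw [hK]
  exact Matrix.posSemidef_sum _ fun r _ => hX.mul_mul_conjTranspose_same (K r)

theorem IsCP.exists_traceDual (h : IsCP L) :
    ∃ L' : Matrix m m ℂ →ₗ[ℂ] Matrix m m ℂ, (∀ X Y, (L X * Y).trace = (X * L' Y).trace) ∧
      ∀ Y, Y.PosSemidef → (L' Y).PosSemidef := by
  obtain ⟨K, hK⟩ := h.exists_kraus
  refine ⟨∑ r, LinearMap.mulLeft ℂ (K r)ᴴ ∘ₗ LinearMap.mulRight ℂ (K r), fun X Y => ?_,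
    fun Y hY => ?_⟩
  · simp only [hK, LinearMap.sum_apply, LinearMap.comp_apply, LinearMap.mulLeft_apply,
      LinearMap.mulRight_apply, Matrix.sum_mul, Matrix.mul_sum, Matrix.trace_sum]
    refine Finset.sum_congr rfl fun r _ => ?_
    rw [show K r * X * (K r)ᴴ * Y = K r * (X * (K r)ᴴ * Y) by simp only [Matrix.mul_assoc],
      Matrix.trace_mul_comm]
    simp only [Matrix.mul_assoc]
  · simp only [LinearMap.sum_apply, LinearMap.comp_apply, LinearMap.mulLeft_apply,
      LinearMap.mulRight_apply, ← Matrix.mul_assoc]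
    exact Matrix.posSemidef_sum _ fun r _ => hY.conjTranspose_mul_mul_same (K r)

theorem IsTP.map_one_of_traceDual (hL : IsTP L) {L' : Matrix m m ℂ →ₗ[ℂ] Matrix m m ℂ}
    (hL' : ∀ X Y, (L X * Y).trace = (X * L' Y).trace) : L' 1 = 1 :=
  Matrix.ext_iff_trace_mul_left.mpr fun X => by rw [← hL', Matrix.mul_one, Matrix.mul_one, hL]

end CompletelyPositive

theorem eq_of_eq_on_densityMatrices {m : Type} [Fintype m] {f g : Matrix m m ℂ →ₗ[ℂ] ℂ}
    (h : ∀ ρ : Matrix m m ℂ, ρ.PosSemidef → ρ.trace = 1 → f ρ = g ρ)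
    {σ : Matrix m m ℂ} (hσ : σ.PosSemidef) : f σ = g σ := by
  by_cases h0 : σ.trace = 0
  · simp [(hσ.trace_eq_zero_iff).mp h0]
  have hσ_eq : σ = σ.trace • (σ.trace⁻¹ • σ) := by rw [smul_smul, mul_inv_cancel₀ h0, one_smul]
  rw [hσ_eq, map_smul f σ.trace, map_smul g σ.trace,
    h _ (hσ.smul (inv_nonneg.mpr hσ.trace_nonneg))
      (by rw [Matrix.trace_smul, smul_eq_mul, inv_mul_cancel₀ h0])]

section Assemblages

variable {d : ℕ} {ι κ J : Type} [Fintype ι] [Fintype κ] [Fintype J]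

theorem IsAssemblage.map (Ψ : κ → Mat d →ₗ[ℂ] Mat d)
    (hpos : ∀ x Y, Y.PosSemidef → (Ψ x Y).PosSemidef) (hone : ∀ x, Ψ x 1 = 1)
    {E : κ → ι → Mat d} (hE : IsAssemblage E) : IsAssemblage fun x a => Ψ x (E x a) :=
  ⟨fun x a => hpos x _ (hE.1 x a), fun x => by rw [← map_sum, hE.2, hone]⟩

variable (Φ : J → Mat d →ₗ[ℂ] Mat d) {M : κ × J → ι → Mat d}

theorem IsAssemblage.sum_map (hpos : ∀ j Y, Y.PosSemidef → (Φ j Y).PosSemidef)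
    (hone : ∑ j, Φ j 1 = 1) (hM : IsAssemblage M) :
    IsAssemblage fun x a => ∑ j, Φ j (M (x, j) a) := by
  refine ⟨fun x a => Matrix.posSemidef_sum _ fun j _ => hpos j _ (hM.1 _ a), fun x => ?_⟩
  rw [Finset.sum_comm]
  simp_rw [← map_sum, hM.2, hone]

theorem JointlyMeasurable.sum_map (hpos : ∀ j Y, Y.PosSemidef → (Φ j Y).PosSemidef)
    (hone : ∑ j, Φ j 1 = 1) (hM : JointlyMeasurable M) :
    JointlyMeasurable fun x a => ∑ j, Φ j (M (x, j) a) := by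
  obtain ⟨Λ, _, G, P, hG, hGsum, hP0, hP1, hMG⟩ := hM
  refine ⟨J × Λ, inferInstance, fun t => Φ t.1 (G t.2), fun a x t => P a (x, t.1) t.2,
    fun t => hpos _ _ (hG _), ?_, fun a x t => hP0 _ _ _, fun x t => hP1 _ _, fun a x => ?_⟩
  · rw [Fintype.sum_prod_type]
    simp_rw [← map_sum, hGsum, hone]
  · rw [Fintype.sum_prod_type]
    simp_rw [hMG, map_sum, map_smul]

end Assemblages

theorem allowedOperations_preserve_IA_general {d : ℕ} {μt κt : Type} [Fintype μt] [Fintype κt]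
    (N : Mat d →ₗ[ℂ] Mat d) (hNIA : IsIA N)
    (p : μt → ℝ) (hp0 : ∀ m, 0 ≤ p m) (hp1 : ∑ m, p m = 1)
    (D : μt → κt → (Mat d →ₗ[ℂ] Mat d)) (hD : ∀ m k, IsChannel (D m k))
    (F : μt → κt → (Mat d →ₗ[ℂ] Mat d)) (hF : ∀ m k, IsFilter (F m k))
    (hinstr : ∀ m, IsTP (∑ k, F m k)) :
    IsIA (∑ m, ∑ k, (p m : ℂ) • (D m k ∘ₗ N ∘ₗ F m k)) := by
  intro ι κ _ _ E hE
  choose D' hD'dual hD'pos using fun m k => (hD m k).1.exists_traceDual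
  choose F' hF'dual hF'pos using fun m k => (hF m k).1.exists_traceDual
  have hF'one (m : μt) : ∑ k, F' m k 1 = 1 := by
    rw [← LinearMap.sum_apply]
    refine (hinstr m).map_one_of_traceDual fun X Y => ?_
    simp only [LinearMap.sum_apply, Matrix.sum_mul, Matrix.mul_sum, Matrix.trace_sum, hF'dual]
  have hE' : IsAssemblage fun (y : κ × μt × κt) a => D' y.2.1 y.2.2 (E y.1 a) :=
    IsAssemblage.map (fun y : κ × μt × κt => D' y.2.1 y.2.2) (fun _ => hD'pos _ _)
      (fun _ => (hD _ _).2.map_one_of_traceDual (hD'dual _ _))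
      ⟨fun y => hE.1 y.1, fun y => hE.2 y.1⟩
  obtain ⟨M, hMA, hMJM, hMstat⟩ := hNIA ι (κ × μt × κt) _ hE'
  let Φ : μt × κt → Mat d →ₗ[ℂ] Mat d := fun j => (p j.1 : ℂ) • F' j.1 j.2
  have hΦpos (j : μt × κt) (Y : Mat d) (hY : Y.PosSemidef) : (Φ j Y).PosSemidef :=
    (hF'pos _ _ Y hY).smul (Complex.zero_le_real.mpr (hp0 j.1))
  have hΦone : ∑ j, Φ j 1 = 1 := by
    simp only [Φ, Fintype.sum_prod_type, LinearMap.smul_apply, ← Finset.smul_sum, hF'one,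
      ← Finset.sum_smul]
    rw [← Complex.ofReal_sum, hp1, Complex.ofReal_one, one_smul]
  refine ⟨fun x a => ∑ j, Φ j (M (x, j) a), hMA.sum_map Φ hΦpos hΦone,
    hMJM.sum_map Φ hΦpos hΦone, fun ρ hρ _ a x => ?_⟩
  simp only [Φ, Fintype.sum_prod_type, LinearMap.sum_apply, LinearMap.smul_apply,
    LinearMap.comp_apply, Matrix.sum_mul, Matrix.mul_sum, Matrix.smul_mul, Matrix.mul_smul,
    Matrix.trace_sum, Matrix.trace_smul]
  refine Finset.sum_congr rfl fun m _ => Finset.sum_congr rfl fun k _ => congrArg _ ?_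
  rw [hD'dual, ← hF'dual]
  -- `F m k ρ` is only subnormalised, so the statistics of `N` are needed beyond states.
  exact eq_of_eq_on_densityMatrices (f := Matrix.traceLinearMap _ ℂ ℂ ∘ₗ
      LinearMap.mulRight ℂ (D' m k (E x a)) ∘ₗ N)
    (g := Matrix.traceLinearMap _ ℂ ℂ ∘ₗ LinearMap.mulRight ℂ (M (x, m, k) a))
    (fun σ hσ hσ1 => hMstat σ hσ hσ1 a (x, m, k)) ((hF m k).1.posSemidef_apply hρ)

/-- golden rule: allowed operations — deterministic mixtures of
pre-processing instruments and post-processing channels — preserve the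
incompatibility-annihilating property. -/
theorem allowedOperations_preserve_IA {d : ℕ} {μt κt : Type} [Fintype μt] [Fintype κt]
    (N : Mat d →ₗ[ℂ] Mat d) (hN : IsChannel N) (hNIA : IsIA N)
    (p : μt → ℝ) (hp0 : ∀ m, 0 ≤ p m) (hp1 : ∑ m, p m = 1)
    (D : μt → κt → (Mat d →ₗ[ℂ] Mat d)) (hD : ∀ m k, IsChannel (D m k))
    (F : μt → κt → (Mat d →ₗ[ℂ] Mat d)) (hF : ∀ m k, IsFilter (F m k))
    (hinstr : ∀ m, IsTP (∑ k, F m k)) :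
    IsIA (∑ m, ∑ k, (p m : ℂ) • (D m k ∘ₗ N ∘ₗ F m k)) :=
  allowedOperations_preserve_IA_general N hNIA p hp0 hp1 D hD F hF hinstr
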